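/- Let L_i(x) = Σ_{j=1}^m θ_{ij}x_j (1 ≤ i ≤ n) be linear forms over k_∞. For any nonnegative integers t_1,...,t_{n+m} with t_1+...+t_n = t_{n+1}+...+t_{n+m}, and any nonnegative integers δ_1,...,δ_n with δ_1+...+δ_n ≤ m-1, there exists a nonzero x ∈ K^m such that ‖L_i(x)‖ ≤ q^{-t_i - 1 - δ_i} for 1 ≤ i ≤ n and |x_j| ≤ q^{t_{n+j}} for 1 ≤ j ≤ m. -/

import Mathlib

/-!
Dirichlet's box principle. There are `q ^ (∑ s_j + m)` tuples `x` with `deg x_j ≤ s_j`. Record for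
each `i` the first `t_i + δ_i` digits after the point of the expansion of `L_i(x)` in powers of
`T⁻¹`: there are only `q ^ (∑ t_i + ∑ δ_i) ≤ q ^ (∑ s_j + m - 1)` possible records, so two distinct
tuples share one, and their difference `x` has `‖L_i(x)‖ ≤ q ^ (-t_i - δ_i - 1)`. The digits of
`α ∈ k∞` are the low coefficients of the polynomial part of `T ^ c * α`; a polynomial part exists
because `Fq(T)` is dense in `k∞` and a rational function is a polynomial plus one of negative
degree.
-/

open FunctionField Multiplicative WithZero

variable (Fq : Type) [Field Fq] [Fintype Fq] [DecidableEq (RatFunc Fq)]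

/-- The embedding of the rational function field into its completion at infinity. -/
noncomputable def embR : RatFunc Fq →+* RatFunc.CompletionAtInfty Fq :=
  letI := RatFunc.inftyValued Fq
  UniformSpace.Completion.coeRingHom

/-- The embedding of the polynomial ring `K = Fq[T]` into `k∞`. -/
noncomputable def embP : Polynomial Fq →+* RatFunc.CompletionAtInfty Fq :=
  (embR Fq).comp (algebraMap (Polynomial Fq) (RatFunc Fq))

/-- The absolute value `|α| = q^{-v(α)}` on `k∞`. -/
noncomputable def vabs (α : RatFunc.CompletionAtInfty Fq) : ℝ :=
  if h : Valued.v α = (0 : WithZero (Multiplicative ℤ)) then 0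
  else (Fintype.card Fq : ℝ) ^ (toAdd (unzero h))

/-- The distance `‖α‖` from `α` to the nearest polynomial. -/
noncomputable def pnorm (α : RatFunc.CompletionAtInfty Fq) : ℝ :=
  ⨅ A : Polynomial Fq, vabs Fq (α - embP Fq A)

open Polynomial

namespace RatFunc

variable {F : Type} [Field F] [DecidableEq (RatFunc F)]

theorem exists_inftyValuation_sub_algebraMap_lt_one (f : RatFunc F) :
    ∃ A : F[X], inftyValuation F (f - algebraMap F[X] (RatFunc F) A) < 1 := by
  refine ⟨f.num /ₘ f.denom, ?_⟩
  have hD : algebraMap F[X] (RatFunc F) f.denom ≠ 0 := algebraMap_ne_zero f.denom_ne_zero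
  have hsub : f - algebraMap F[X] (RatFunc F) (f.num /ₘ f.denom) =
      algebraMap F[X] (RatFunc F) (f.num %ₘ f.denom) / algebraMap F[X] (RatFunc F) f.denom := by
    rw [eq_div_iff hD, modByMonic_eq_sub_mul_div, map_sub, map_mul]
    nth_rw 1 [← num_div_denom f]
    rw [sub_mul, div_mul_cancel₀ _ hD]
    ring
  rcases eq_or_ne (f.num %ₘ f.denom) 0 with h0 | h0
  · simp [hsub, h0]
  rw [hsub, map_div₀, div_lt_one₀ ((inftyValuation F).pos_iff.2 hD),
    inftyValuation_apply, inftyValuation_apply, inftyValuation.polynomial F h0,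
    inftyValuation.polynomial F f.denom_ne_zero, exp_lt_exp]
  exact_mod_cast natDegree_lt_natDegree h0 (degree_modByMonic_lt _ f.monic_denom)

end RatFunc

section CompletionAtInfty

variable {F : Type} [Field F] [DecidableEq (RatFunc F)]

theorem valued_embR (f : RatFunc F) : Valued.v (embR F f) = RatFunc.inftyValuation F f :=
  @Valued.valuedCompletion_apply (RatFunc F) _ _ _ (RatFunc.inftyValued F) f

theorem valued_embP (p : F[X]) :
    Valued.v (embP F p) = RatFunc.inftyValuation F (algebraMap F[X] (RatFunc F) p) :=
  valued_embR _

theorem valued_embP_X : Valued.v (embP F X) = exp 1 := by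
  rw [valued_embP, RatFunc.algebraMap_X, RatFunc.inftyValuation.X]

theorem valued_embP_le_exp {p : F[X]} {N : ℕ} (hp : p.natDegree ≤ N) :
    Valued.v (embP F p) ≤ exp (N : ℤ) := by
  rcases eq_or_ne p 0 with rfl | h0
  · simp
  rw [valued_embP, RatFunc.inftyValuation_apply, RatFunc.inftyValuation.polynomial F h0,
    exp_le_exp]
  exact_mod_cast hp

theorem exists_valued_sub_embP_lt_one (α : RatFunc.CompletionAtInfty F) :
    ∃ A : F[X], Valued.v (α - embP F A) < 1 := by
  have hdense : DenseRange (embR F) :=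
    @UniformSpace.Completion.denseRange_coe (RatFunc F) (RatFunc.inftyValued F).toUniformSpace
  have hopen : IsOpen {β : RatFunc.CompletionAtInfty F | Valued.v (α - β) < 1} := by
    simpa only [Set.preimage_ofPred_eq, Pi.sub_apply, id, Valuation.restrict_lt_one_iff] using
      (Valued.isOpen_ball (RatFunc.CompletionAtInfty F) 1).preimage
        ((continuous_const (y := α)).sub continuous_id)
  obtain ⟨f, hf⟩ := hdense.exists_mem_open hopen ⟨α, by simp⟩
  obtain ⟨A, hA⟩ := RatFunc.exists_inftyValuation_sub_algebraMap_lt_one f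
  refine ⟨A, ?_⟩
  have hsplit : α - embP F A = (α - embR F f) + embR F (f - algebraMap F[X] (RatFunc F) A) := by
    rw [map_sub, embP, RingHom.comp_apply]
    ring
  rw [hsplit]
  exact Valuation.map_add_lt _ hf (by rwa [valued_embR])

noncomputable def polyPart (α : RatFunc.CompletionAtInfty F) : F[X] :=
  (exists_valued_sub_embP_lt_one α).choose

theorem valued_sub_embP_polyPart_lt_one (α : RatFunc.CompletionAtInfty F) :
    Valued.v (α - embP F (polyPart α)) < 1 :=
  (exists_valued_sub_embP_lt_one α).choose_spec

/-- `fracDigits c α k` is the coefficient of `T ^ (k - c)` in the Laurent expansion of `α`. -/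
noncomputable def fracDigits (c : ℕ) (α : RatFunc.CompletionAtInfty F) : Fin c → F :=
  fun k => (polyPart (embP F X ^ c * α)).coeff k

theorem exists_valued_sub_sub_embP_le_of_fracDigits_eq {c : ℕ}
    {α β : RatFunc.CompletionAtInfty F} (h : fracDigits c α = fracDigits c β) :
    ∃ A : F[X], Valued.v (α - β - embP F A) ≤ exp (-(c : ℤ) - 1) := by
  set T := embP F X
  obtain ⟨A, hA⟩ : X ^ c ∣ polyPart (T ^ c * α) - polyPart (T ^ c * β) :=
    X_pow_dvd_iff.2 fun d hd => by rw [coeff_sub, sub_eq_zero]; exact congrFun h ⟨d, hd⟩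
  refine ⟨A, ?_⟩
  have hA' : embP F (polyPart (T ^ c * α)) - embP F (polyPart (T ^ c * β)) = T ^ c * embP F A := by
    rw [← map_sub, hA, map_mul, map_pow]
  have hlt : exp (c : ℤ) * Valued.v (α - β - embP F A) < 1 := by
    have hT : Valued.v (T ^ c) = exp (c : ℤ) := by
      rw [map_pow, valued_embP_X, ← exp_nsmul, nsmul_one]
    rw [← hT, ← map_mul,
      show T ^ c * (α - β - embP F A) = (T ^ c * α - embP F (polyPart (T ^ c * α))) -
        (T ^ c * β - embP F (polyPart (T ^ c * β))) by linear_combination hA']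
    exact Valuation.map_sub_lt _ (valued_sub_embP_polyPart_lt_one _)
      (valued_sub_embP_polyPart_lt_one _)
  rwa [← lt_mul_exp_iff_le exp_ne_zero, ← exp_add, sub_add_cancel, exp_neg, ← one_mul (exp _)⁻¹,
    lt_mul_inv_iff₀' exp_pos]

end CompletionAtInfty

theorem Polynomial.natCard_degreeLE (F : Type*) [Field F] (n : ℕ) :
    Nat.card (degreeLE F n) = Nat.card F ^ (n + 1) := by
  rw [← degreeLT_succ_eq_degreeLE, Nat.card_congr (degreeLTEquiv F (n + 1)).toEquiv, Nat.card_fun,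
    Nat.card_fin]

theorem vabs_nonneg (α : RatFunc.CompletionAtInfty Fq) : 0 ≤ vabs Fq α := by
  unfold vabs
  split_ifs <;> positivity

theorem vabs_le_zpow_of_valued_le {α : RatFunc.CompletionAtInfty Fq} {d : ℤ}
    (h : Valued.v α ≤ exp d) : vabs Fq α ≤ (Fintype.card Fq : ℝ) ^ d := by
  unfold vabs
  split_ifs with h0
  · positivity
  rw [toAdd_unzero_eq_log h0]
  exact zpow_le_zpow_right₀ (by exact_mod_cast Fintype.card_pos) ((log_le_iff_le_exp h0).2 h)

theorem pnorm_le_zpow_of_valued_sub_embP_le {α : RatFunc.CompletionAtInfty Fq} (A : Fq[X]) {d : ℤ}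
    (h : Valued.v (α - embP Fq A) ≤ exp d) : pnorm Fq α ≤ (Fintype.card Fq : ℝ) ^ d :=
  (ciInf_le ⟨0, Set.forall_mem_range.2 fun _ => vabs_nonneg Fq _⟩ A).trans
    (vabs_le_zpow_of_valued_le Fq h)

theorem exists_ne_forall_exists_valued_sub_sub_embP_le {V ι : Type*} [Fintype ι]
    (L : V → ι → RatFunc.CompletionAtInfty Fq) (c : ι → ℕ)
    (hV : Fintype.card Fq ^ ∑ i, c i < Nat.card V) :
    ∃ x y, x ≠ y ∧
      ∀ i, ∃ A : Fq[X], Valued.v (L x i - L y i - embP Fq A) ≤ exp (-(c i : ℤ) - 1) := by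
  let digits : V → ∀ i, Fin (c i) → Fq := fun x i => fracDigits (c i) (L x i)
  have hcard : Nat.card (∀ i, Fin (c i) → Fq) = Fintype.card Fq ^ ∑ i, c i := by
    rw [Nat.card_pi]
    simp_rw [Nat.card_fun, Nat.card_fin]
    rw [Finset.prod_pow_eq_pow_sum, Nat.card_eq_fintype_card]
  obtain ⟨x, y, hne, heq⟩ : ∃ x y, x ≠ y ∧ digits x = digits y := by
    by_contra! hinj
    have hinj : Function.Injective digits := fun x y hxy => by_contra fun hne => hinj x y hne hxy
    exact (Nat.card_le_card_of_injective digits hinj).not_gt (hcard ▸ hV)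
  exact ⟨x, y, hne, fun i => exists_valued_sub_sub_embP_le_of_fracDigits_eq (congrFun heq i)⟩

theorem stmt12 (n m : ℕ) (θ : Matrix (Fin n) (Fin m) (RatFunc.CompletionAtInfty Fq))
    (t : Fin n → ℕ) (s : Fin m → ℕ) (hts : ∑ i, t i = ∑ j, s j)
    (δ : Fin n → ℕ) (hδ : ∑ i, δ i + 1 ≤ m) :
    ∃ x : Fin m → Polynomial Fq, x ≠ 0 ∧
      (∀ i, pnorm Fq (∑ j, θ i j * embP Fq (x j)) ≤
        (Fintype.card Fq : ℝ) ^ (-(t i : ℤ) - 1 - (δ i : ℤ))) ∧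
      ∀ j, vabs Fq (embP Fq (x j)) ≤ (Fintype.card Fq : ℝ) ^ (s j : ℤ) := by
  have hV : Fintype.card Fq ^ ∑ i, (t i + δ i) < Nat.card (∀ j, degreeLE Fq (s j)) := by
    simp_rw [Nat.card_pi, natCard_degreeLE, Finset.prod_pow_eq_pow_sum, Nat.card_eq_fintype_card,
      Finset.sum_add_distrib]
    simp only [Finset.sum_const, Finset.card_univ, Fintype.card_fin, smul_eq_mul, mul_one]
    exact Nat.pow_lt_pow_right Fintype.one_lt_card (by omega)
  obtain ⟨y, z, hne, happrox⟩ := exists_ne_forall_exists_valued_sub_sub_embP_le Fq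
    (fun (y : ∀ j, degreeLE Fq (s j)) i => ∑ j, θ i j * embP Fq (y j)) _ hV
  refine ⟨fun j => (y j : Fq[X]) - z j, fun h => hne (funext fun j => ?_), fun i => ?_,
    fun j => ?_⟩
  · exact Subtype.ext (sub_eq_zero.1 (congrFun h j))
  · obtain ⟨A, hA⟩ := happrox i
    refine pnorm_le_zpow_of_valued_sub_embP_le Fq A ?_
    convert hA using 2
    · simp only [map_sub, mul_sub, Finset.sum_sub_distrib]
    · push_cast; ring
  · refine vabs_le_zpow_of_valued_le Fq (valued_embP_le_exp (natDegree_le_iff_degree_le.2 ?_))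
    exact mem_degreeLE.1 (Submodule.sub_mem _ (y j).2 (z j).2)
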